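/- arXiv:0911.0979 — 3 statements merged into one kernel-verified Lean document; each statement's English description precedes it below -/
import Mathlib

section
/- In the group Z² * Z presented as ⟨a, b, c | [a,b]⟩, for any integers i, j, k with |i| + |j| ≠ 0 and k ≠ 0, setting t = [aⁱbʲ, cᵏ] = (aⁱbʲ)⁻¹ c⁻ᵏ (aⁱbʲ) cᵏ, the subgroup generated by a, b, and t is isomorphic to Z² * Z; more precisely, ⟨a, b, t⟩ factors as the free product ⟨a, b⟩ * ⟨t⟩ with ⟨a,b⟩ ≅ Z² and ⟨t⟩ ≅ Z. -/
/-!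
Write `g = aⁱbʲ`, which has infinite order in `Z²`, and `d = cᵏ ≠ 1`, so that
`t = g⁻¹ · d⁻¹gd`. The endomorphism of `Z² ∗ Z` fixing `Z²` and sending the generator `x` of
`Z` to `g⁻¹x` is an automorphism, so it suffices that `a ↦ a`, `b ↦ b`, `c ↦ d⁻¹gd` is
injective. This follows by ping-pong on the reduced words of `Z² ∗ Z`: a nontrivial letter of
`Z²` turns a word starting with a letter of `Z` into one starting with a letter of `Z²`, while
`d⁻¹gⁿd` (`n ≠ 0`) turns any word not starting with a letter of `Z` into one starting with `d⁻¹`.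
-/

open Monoid

/-- The commutator convention of the paper: `[u,v] = u⁻¹ v⁻¹ u v`. -/
def pcomm {G : Type*} [Group G] (u v : G) : G := u⁻¹ * v⁻¹ * u * v

open Function Cardinal Pointwise

universe u

theorem Monoid.CoprodI.Word.fstIdx_of_smul {ι : Type*} {M : ι → Type*} [∀ i, Monoid (M i)]
    [∀ i, DecidableEq (M i)] [DecidableEq ι] {i : ι} {m : M i} {w : Word M}
    (hw : w.fstIdx ≠ some i) (hm : m ≠ 1) : (CoprodI.of m • w).fstIdx = some i := by
  rw [← cons_eq_smul (h1 := hw) (h2 := hm), fstIdx_cons]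

namespace Monoid.Coprod

section PairFamily

variable {A B : Type u} [Group A] [Group B]

/-- Reduced words and the ping-pong lemma are only available for `CoprodI`, so `A ∗ B` is
transported to the coproduct of this family. -/
abbrev pairFamily (A B : Type u) : Bool → Type u := fun b => cond b B A

instance pairFamily.instGroup : ∀ b, Group (pairFamily A B b)
  | false => inferInstanceAs (Group A)
  | true => inferInstanceAs (Group B)

def toCoprodI : A ∗ B →* CoprodI (pairFamily A B) :=
  lift (CoprodI.of (M := pairFamily A B) (i := false))
    (CoprodI.of (M := pairFamily A B) (i := true))

def ofCoprodI : CoprodI (pairFamily A B) →* A ∗ B :=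
  CoprodI.lift fun b => match b with
    | false => inl
    | true => inr

@[simp]
theorem toCoprodI_inl (a : A) :
    toCoprodI (inl a : A ∗ B) = CoprodI.of (M := pairFamily A B) (i := false) a :=
  lift_apply_inl _ _ _

@[simp]
theorem toCoprodI_inr (b : B) :
    toCoprodI (inr b : A ∗ B) = CoprodI.of (M := pairFamily A B) (i := true) b :=
  lift_apply_inr _ _ _

theorem ofCoprodI_comp_toCoprodI :
    (ofCoprodI (A := A) (B := B)).comp toCoprodI = MonoidHom.id _ :=
  hom_ext (MonoidHom.ext fun _ => CoprodI.lift_of _ _) (MonoidHom.ext fun _ => CoprodI.lift_of _ _)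

theorem toCoprodI_injective : Injective (toCoprodI : A ∗ B →* _) :=
  LeftInverse.injective (g := ofCoprodI) (DFunLike.congr_fun ofCoprodI_comp_toCoprodI)

theorem lift_injective_of_ping_pong {G α : Type*} [Group G] [MulAction G α]
    (f : A →* G) (g : B →* G) (hcard : 3 ≤ #A ∨ 3 ≤ #B) (X Y : Set α)
    (hX : X.Nonempty) (hY : Y.Nonempty) (hXY : Disjoint X Y)
    (hf : ∀ a ≠ 1, f a • Y ⊆ X) (hg : ∀ b ≠ 1, g b • X ⊆ Y) :
    Injective (lift f g) := by
  let F : ∀ b, pairFamily A B b →* G := fun b => match b with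
    | false => f
    | true => g
  have hlift : lift f g = (CoprodI.lift F).comp toCoprodI :=
    hom_ext (MonoidHom.ext fun _ => (CoprodI.lift_of _ _).symm)
      (MonoidHom.ext fun _ => (CoprodI.lift_of _ _).symm)
  rw [hlift, MonoidHom.coe_comp]
  refine .comp ?_ toCoprodI_injective
  refine CoprodI.lift_injective_of_ping_pong F (hcard.elim (fun h => .inr ⟨false, h⟩)
    (fun h => .inr ⟨true, h⟩)) (fun b => cond b Y X) (Bool.rec hX hY) ?_ ?_
  · rintro (_ | _) (_ | _) h
    exacts [absurd rfl h, hXY, hXY.symm, absurd rfl h]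
  · rintro (_ | _) (_ | _) h
    exacts [absurd rfl h, hf, hg, absurd rfl h]

end PairFamily

theorem lift_inl_conj_inr_comp_injective {A B C : Type u} [Group A] [Group B] [Group C]
    (hA : 3 ≤ #A) {f : B →* A} (hf : Injective f) {d : C} (hd : d ≠ 1) :
    Injective (lift (inl : A →* A ∗ C)
      ((MulAut.conj (inr d⁻¹)).toMonoidHom.comp (inl.comp f))) := by
  classical
  refine .of_comp (f := toCoprodI) ?_
  rw [← MonoidHom.coe_comp, comp_lift]
  refine lift_injective_of_ping_pong (α := CoprodI.Word (pairFamily A C)) _ _ (.inl hA)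
    {w | w.fstIdx ≠ some true} {w | w.fstIdx = some true} ⟨.empty, nofun⟩
    ⟨_, CoprodI.Word.fstIdx_of_smul (m := d) (w := .empty) nofun hd⟩
    (Set.disjoint_left.mpr fun _ hX hY => hX hY) ?_ ?_
  · rintro a ha _ ⟨w, hw, rfl⟩
    simp only [Set.mem_ofPred_eq] at hw ⊢
    rw [MonoidHom.comp_apply, toCoprodI_inl,
      CoprodI.Word.fstIdx_of_smul (by simp [hw]) ha]
    simp
  · rintro b hb _ ⟨w, hw, rfl⟩
    simp only [Set.mem_ofPred_eq] at hw ⊢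
    simp only [MonoidHom.comp_apply, MulEquiv.coe_toMonoidHom, MulAut.conj_apply]
    rw [← map_inv (inr : C →* A ∗ C), inv_inv]
    simp only [map_mul, toCoprodI_inl, toCoprodI_inr, mul_smul]
    have hdw := CoprodI.Word.fstIdx_of_smul hw hd
    have hfdw := CoprodI.Word.fstIdx_of_smul (i := false) (by rw [hdw]; decide)
      ((map_ne_one_iff f hf).mpr hb)
    exact CoprodI.Word.fstIdx_of_smul (by rw [hfdw]; decide) (inv_ne_one.mpr hd)

theorem lift_zpowersHom_mul_injective {A G : Type*} [Group A] [Group G] (f : A →* G) (a : A)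
    {s : G} (h : Injective (lift f (zpowersHom G s))) :
    Injective (lift f (zpowersHom G (f a * s))) := by
  let mulLeft : A → A ∗ Multiplicative ℤ →* A ∗ Multiplicative ℤ :=
    fun a => lift inl (zpowersHom _ (inl a * inr (.ofAdd 1)))
  have hinv : (mulLeft a⁻¹).comp (mulLeft a) = .id _ :=
    hom_ext (by ext; simp [mulLeft]) (MonoidHom.ext_mint (by simp [mulLeft]))
  have hlift : lift f (zpowersHom G (f a * s)) = (lift f (zpowersHom G s)).comp (mulLeft a) :=
    hom_ext (by ext; simp [mulLeft]) (MonoidHom.ext_mint (by simp [mulLeft]))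
  rw [hlift, MonoidHom.coe_comp]
  exact h.comp (LeftInverse.injective (g := mulLeft a⁻¹) (DFunLike.congr_fun hinv))

theorem lift_inl_zpowersHom_pcomm_injective {A C : Type} [Group A] [Group C] {g : A}
    (hg : ¬IsOfFinOrder g) {d : C} (hd : d ≠ 1) :
    Injective (lift (inl : A →* A ∗ C) (zpowersHom _ (pcomm (inl g) (inr d)))) := by
  have hzpow : Injective (zpowersHom A g) :=
    (injective_zpow_iff_not_isOfFinOrder.mpr hg).comp Multiplicative.toAdd.injective
  have hA : 3 ≤ #A := by
    have := Infinite.of_injective _ hzpow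
    exact (natCast_lt_aleph0 (n := 3)).le.trans (aleph0_le_mk A)
  have hpcomm : pcomm (inl g) (inr d : A ∗ C) = inl g⁻¹ * MulAut.conj (inr d⁻¹) (inl g) := by
    simp [pcomm, mul_assoc]
  have hzpowers : zpowersHom (A ∗ C) (MulAut.conj (inr d⁻¹) (inl g)) =
      (MulAut.conj (inr d⁻¹)).toMonoidHom.comp (inl.comp (zpowersHom A g)) :=
    MonoidHom.ext_mint (by simp)
  rw [hpcomm]
  apply lift_zpowersHom_mul_injective
  rw [hzpowers]
  exact lift_inl_conj_inr_comp_injective hA hzpow hd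

end Monoid.Coprod

open Monoid.Coprod

/-- In `Z² * Z = ⟨a,b,c | [a,b]⟩`, for integers `i j k` with `|i|+|j| ≠ 0`
and `k ≠ 0`, setting `t = [aⁱbʲ, cᵏ]`, the subgroup `⟨a,b,t⟩` factors as
`⟨a,b⟩ * ⟨t⟩ ≅ Z² * Z`: the homomorphism from `Z² * Z` sending `a ↦ a`,
`b ↦ b`, `c ↦ t` is injective. -/
theorem subgroup_abt_free_product (i j k : ℤ) (hij : |i| + |j| ≠ 0) (hk : k ≠ 0)
    (a b c t : Coprod (Multiplicative (ℤ × ℤ)) (Multiplicative ℤ))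
    (ha : a = Coprod.inl (Multiplicative.ofAdd ((1, 0) : ℤ × ℤ)))
    (hb : b = Coprod.inl (Multiplicative.ofAdd ((0, 1) : ℤ × ℤ)))
    (hc : c = Coprod.inr (Multiplicative.ofAdd (1 : ℤ)))
    (ht : t = pcomm (a ^ i * b ^ j) (c ^ k)) :
    Function.Injective
      (Coprod.lift (Coprod.inl : Multiplicative (ℤ × ℤ) →* Coprod (Multiplicative (ℤ × ℤ)) (Multiplicative ℤ))
        (zpowersHom _ t)) := by
  have hab : a ^ i * b ^ j = inl (.ofAdd (i, j)) := by
    subst ha hb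
    simp [← map_zpow, ← map_mul, ← ofAdd_zsmul, ← ofAdd_add]
  have hck : c ^ k = inr (.ofAdd k) := by
    subst hc
    simp [← map_zpow, ← ofAdd_zsmul]
  have hg : ¬IsOfFinOrder (Multiplicative.ofAdd (i, j)) := by
    rw [isOfFinOrder_iff_eq_one, ofAdd_eq_one, Prod.mk_eq_zero]
    rintro ⟨rfl, rfl⟩
    simp at hij
  rw [ht, hab, hck]
  exact lift_inl_zpowersHom_pcomm_injective hg (by simpa using hk)
end

section
/- In the group Z² * Z = ⟨a, b, c | [a,b]⟩, every (a,b,c)-commutator has infinite order and is nontrivial. Here an (a,b,c)-commutator is any element of the form [a^{x₁}b^{y₁}, [a^{x₂}b^{y₂}, ... [a^{xₙ}b^{yₙ}, c^{zₙ}]^{zₙ₋₁} ... ]^{z₁}] with n ≥ 1, |xᵢ| + |yᵢ| ≠ 0 and zᵢ ≠ 0 for all i. -/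
open Monoid

/-- `(a,b,c)`-commutators: iterated commutators
`[a^{x₁}b^{y₁}, [a^{x₂}b^{y₂}, … [a^{xₙ}b^{yₙ}, c^{zₙ}]^{zₙ₋₁} … ]^{z₁}]`
with `|xᵢ| + |yᵢ| ≠ 0` and `zᵢ ≠ 0` for all `i`. -/
inductive IsABCCommutator {G : Type*} [Group G] (a b c : G) : G → Prop
  | base (x y z : ℤ) (hxy : |x| + |y| ≠ 0) (hz : z ≠ 0) :
      IsABCCommutator a b c (pcomm (a ^ x * b ^ y) (c ^ z))
  | step (x y z : ℤ) (t : G) (hxy : |x| + |y| ≠ 0) (hz : z ≠ 0) :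
      IsABCCommutator a b c t → IsABCCommutator a b c (pcomm (a ^ x * b ^ y) (t ^ z))

/-!
Send `ℤ² * ℤ` to the wreath product `ℤ ≀ ℤ² = ℤ[ℤ²] ⋊ ℤ²`, with `a, b` going to the generators
of `ℤ²` and `c` to `1 ∈ ℤ[ℤ²]`. The commutator of `g ∈ ℤ²` with an element `m` of the base group
is `(1 - g⁻¹) m`, so an `(a,b,c)`-commutator lands in the base group as a nonzero integer times a
product of factors `1 - s` with `s ≠ 1` a monomial. This is nonzero because `ℤ[ℤ²]` is a domain,
and it has infinite order because `ℤ[ℤ²]` is torsion-free.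
-/

open SemidirectProduct
open scoped AddMonoidAlgebra

theorem pcomm_map {G H : Type*} [Group G] [Group H] (f : G →* H) (u v : G) :
    f (pcomm u v) = pcomm (f u) (f v) := by
  simp only [pcomm, map_mul, map_inv]

theorem IsABCCommutator.map {G H : Type*} [Group G] [Group H] (f : G →* H) {a b c w : G}
    (hw : IsABCCommutator a b c w) : IsABCCommutator (f a) (f b) (f c) (f w) := by
  induction hw with
  | base x y z hxy hz =>
    simpa only [pcomm_map, map_mul, map_zpow] using IsABCCommutator.base x y z hxy hz
  | step x y z t hxy hz _ ih =>
    simpa only [pcomm_map, map_mul, map_zpow] using IsABCCommutator.step x y z _ hxy hz ih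

section UnitsAction

variable {R G : Type*} [CommRing R] [Group G]

def mulLeftAut (χ : G →* Rˣ) : G →* MulAut (Multiplicative R) :=
  (MulAutMultiplicative R).symm.toMonoidHom.comp (AddAut.mulLeft.comp χ)

theorem mulLeftAut_apply (χ : G →* Rˣ) (g : G) (m : R) :
    mulLeftAut χ g (.ofAdd m) = .ofAdd (χ g * m) := rfl

theorem pcomm_inr_inl (χ : G →* Rˣ) (g : G) (m : R) :
    pcomm (inr g : Multiplicative R ⋊[mulLeftAut χ] G) (inl (.ofAdd m)) =
      inl (.ofAdd ((1 - χ g⁻¹) * m)) := by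
  have hconj : (inr g⁻¹ : Multiplicative R ⋊[mulLeftAut χ] G) * inl (.ofAdd (-m)) * inr g =
      inl (.ofAdd (χ g⁻¹ * -m)) := by
    rw [← mulLeftAut_apply, inl_aut, inv_inv]
  have hinl : (inl (.ofAdd m) : Multiplicative R ⋊[mulLeftAut χ] G)⁻¹ = inl (.ofAdd (-m)) := by
    rw [← map_inv]; rfl
  rw [pcomm, hinl, ← map_inv, hconj, ← map_mul, ← ofAdd_add]
  congr 2
  ring

end UnitsAction

instance AddMonoidAlgebra.instIsAddTorsionFree {R M : Type*} [Semiring R] [IsAddTorsionFree R] :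
    IsAddTorsionFree R[M] :=
  Function.Injective.isAddTorsionFree
    (AddMonoidAlgebra.coeffAddEquiv : R[M] ≃+ (M →₀ R)).toAddMonoidHom
    AddMonoidAlgebra.coeffAddEquiv.injective

abbrev IntWreathIntSq :=
  Multiplicative ℤ[ℤ × ℤ] ⋊[mulLeftAut (AddMonoidAlgebra.of ℤ (ℤ × ℤ)).toHomUnits]
    Multiplicative (ℤ × ℤ)

namespace IntWreathIntSq

theorem inr_zpow_mul_inr_zpow (x y : ℤ) :
    (inr (.ofAdd (1, 0)) : IntWreathIntSq) ^ x * inr (.ofAdd (0, 1)) ^ y = inr (.ofAdd (x, y)) := by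
  rw [← map_zpow inr, ← map_zpow inr, ← map_mul, ← ofAdd_zsmul, ← ofAdd_zsmul, ← ofAdd_add]
  simp

theorem inl_zpow (m : ℤ[ℤ × ℤ]) (z : ℤ) :
    (inl (.ofAdd m) : IntWreathIntSq) ^ z = inl (.ofAdd (z • m)) := by
  rw [← map_zpow, ← ofAdd_zsmul]

theorem exists_pcomm_inr_inl_eq {x y : ℤ} (hxy : |x| + |y| ≠ 0) {z : ℤ} (hz : z ≠ 0)
    {m : ℤ[ℤ × ℤ]} (hm : m ≠ 0) : ∃ m' ≠ 0,
    pcomm ((inr (.ofAdd (1, 0)) : IntWreathIntSq) ^ x * inr (.ofAdd (0, 1)) ^ y)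
      (inl (.ofAdd m) ^ z) = inl (.ofAdd m') := by
  have hg : (Multiplicative.ofAdd (x, y))⁻¹ ≠ 1 := by
    rw [inv_ne_one, Ne, ofAdd_eq_one, Prod.ext_iff]
    rintro ⟨rfl, rfl⟩
    simp at hxy
  have hunit :
      (1 : ℤ[ℤ × ℤ]) - AddMonoidAlgebra.of ℤ (ℤ × ℤ) (Multiplicative.ofAdd (x, y))⁻¹ ≠ 0 := by
    rw [sub_ne_zero, ← map_one (AddMonoidAlgebra.of ℤ (ℤ × ℤ))]
    exact (AddMonoidAlgebra.of_injective.ne hg).symm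
  rw [inr_zpow_mul_inr_zpow, inl_zpow, pcomm_inr_inl]
  exact ⟨_, mul_ne_zero hunit (smul_ne_zero hz hm), rfl⟩

theorem exists_eq_inl_of_isABCCommutator {w : IntWreathIntSq}
    (hw : IsABCCommutator (inr (.ofAdd (1, 0))) (inr (.ofAdd (0, 1))) (inl (.ofAdd 1)) w) :
    ∃ m ≠ 0, w = inl (.ofAdd m) := by
  induction hw with
  | base x y z hxy hz => exact exists_pcomm_inr_inl_eq hxy hz one_ne_zero
  | step x y z t hxy hz _ ih =>
    obtain ⟨m, hm, rfl⟩ := ih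
    exact exists_pcomm_inr_inl_eq hxy hz hm

theorem not_isOfFinOrder_inl {m : ℤ[ℤ × ℤ]} (hm : m ≠ 0) :
    ¬ IsOfFinOrder (inl (.ofAdd m) : IntWreathIntSq) := by
  rw [inl_injective.isOfFinOrder_iff, isOfFinOrder_ofAdd_iff]
  exact not_isOfFinAddOrder_of_isAddTorsionFree hm

end IntWreathIntSq

noncomputable def coprodToIntWreathIntSq :
    Coprod (Multiplicative (ℤ × ℤ)) (Multiplicative ℤ) →* IntWreathIntSq :=
  Coprod.lift inr (inl.comp (Int.castAddHom ℤ[ℤ × ℤ]).toMultiplicative)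

/-- In `Z² * Z = ⟨a,b,c | [a,b]⟩`, every `(a,b,c)`-commutator is nontrivial
and has infinite order. -/
theorem abcCommutator_infinite_order
    (a b c : Coprod (Multiplicative (ℤ × ℤ)) (Multiplicative ℤ))
    (ha : a = Coprod.inl (Multiplicative.ofAdd ((1, 0) : ℤ × ℤ)))
    (hb : b = Coprod.inl (Multiplicative.ofAdd ((0, 1) : ℤ × ℤ)))
    (hc : c = Coprod.inr (Multiplicative.ofAdd (1 : ℤ)))
    (w : Coprod (Multiplicative (ℤ × ℤ)) (Multiplicative ℤ))
    (hw : IsABCCommutator a b c w) :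
    w ≠ 1 ∧ ¬ IsOfFinOrder w := by
  subst ha hb hc
  obtain ⟨m, hm, hw'⟩ :=
    IntWreathIntSq.exists_eq_inl_of_isABCCommutator (hw.map coprodToIntWreathIntSq)
  have hinf : ¬ IsOfFinOrder w := fun h ↦
    IntWreathIntSq.not_isOfFinOrder_inl hm (hw' ▸ coprodToIntWreathIntSq.isOfFinOrder h)
  exact ⟨fun h ↦ hinf (h ▸ IsOfFinOrder.one), hinf⟩
end

section
/- Let X be a topological space and let g, h be commuting homeomorphisms of X, each with finitely many 'important points' in the following sense: for g, the set I(g) of points p such that p is fixed by g and g is (locally) a non-identity contraction or expansion at p, and assume I(g) and I(h) are finite, and that the closure of Supp(g) equals Supp(g) ∪ I(g) (similarly for h). Then I(g) ∩ closure(Supp(h)) ⊆ I(h); consequently I(g) ∩ I(h) = I(g) ∩ closure(Supp(h)) = I(h) ∩ closure(Supp(g)). -/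
instance homeoGroup {X : Type*} [TopologicalSpace X] : Group (X ≃ₜ X) where
  mul f g := g.trans f
  one := Homeomorph.refl X
  inv := Homeomorph.symm
  mul_assoc _ _ _ := Homeomorph.ext fun _ => rfl
  one_mul _ := Homeomorph.ext fun _ => rfl
  mul_one _ := Homeomorph.ext fun _ => rfl
  inv_mul_cancel f := Homeomorph.ext fun x => f.symm_apply_apply x

/-!
If `p ∈ I(g)` and `h` commutes with `g`, then `g = g^{hⁿ}` for every `n`, so equivariance of `I`
puts the whole `h`-orbit of `p` inside the finite set `I(g)`. Finite `h`-orbits are trivial,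
so `h` fixes `p`; hence `p` lies in `closure (Supp h)` only through `I(h)`.
-/

section ImportantPoints

variable {X : Type*} [TopologicalSpace X] {I : (X ≃ₜ X) → Set X}

theorem apply_mem_of_commute (hconj : ∀ f u : X ≃ₜ X, I (u⁻¹ * f * u) = ⇑u⁻¹ '' I f)
    {f u : X ≃ₜ X} (hfu : Commute f u) {p : X} (hp : p ∈ I f) : u p ∈ I f := by
  have hf : u⁻¹⁻¹ * f * u⁻¹ = f := by
    rw [inv_inv, ← hfu.eq, mul_inv_cancel_right]
  have hI := hconj f u⁻¹
  rw [hf, inv_inv] at hI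
  exact hI ▸ Set.mem_image_of_mem u hp

theorem zpow_orbit_subset_of_commute
    (hconj : ∀ f u : X ≃ₜ X, I (u⁻¹ * f * u) = ⇑u⁻¹ '' I f)
    {f u : X ≃ₜ X} (hfu : Commute f u) {p : X} (hp : p ∈ I f) :
    {x | ∃ k : ℤ, x = (u ^ k) p} ⊆ I f := by
  rintro _ ⟨k, rfl⟩
  exact apply_mem_of_commute hconj (hfu.zpow_right k) hp

theorem mem_of_mem_closure_support_of_commute
    (hconj : ∀ f u : X ≃ₜ X, I (u⁻¹ * f * u) = ⇑u⁻¹ '' I f)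
    {f u : X ≃ₜ X} (hfin : (I f).Finite) (hfu : Commute f u)
    (hcl : closure {x | u x ≠ x} = {x | u x ≠ x} ∪ I u)
    (hu : ∀ p : X, ({x | ∃ k : ℤ, x = (u ^ k) p}).Finite → u p = p)
    {p : X} (hpf : p ∈ I f) (hpu : p ∈ closure {x | u x ≠ x}) : p ∈ I u := by
  have hfixed : u p = p := hu p (hfin.subset (zpow_orbit_subset_of_commute hconj hfu hpf))
  rw [hcl] at hpu
  exact hpu.resolve_left (not_not_intro hfixed)

theorem inter_closure_support_eq_of_commute
    (hconj : ∀ f u : X ≃ₜ X, I (u⁻¹ * f * u) = ⇑u⁻¹ '' I f)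
    {f u : X ≃ₜ X} (hfin : (I f).Finite) (hfu : Commute f u)
    (hcl : closure {x | u x ≠ x} = {x | u x ≠ x} ∪ I u)
    (hu : ∀ p : X, ({x | ∃ k : ℤ, x = (u ^ k) p}).Finite → u p = p) :
    I f ∩ closure {x | u x ≠ x} = I f ∩ I u := by
  refine Set.Subset.antisymm (fun p ⟨hpf, hpu⟩ => ⟨hpf, ?_⟩) ?_
  · exact mem_of_mem_closure_support_of_commute hconj hfin hfu hcl hu hpf hpu
  · exact Set.inter_subset_inter_right _ (hcl ▸ Set.subset_union_right)

end ImportantPoints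

theorem important_point_preservation_general {X : Type*} [TopologicalSpace X]
    (I : (X ≃ₜ X) → Set X)
    (hfin : ∀ f : X ≃ₜ X, (I f).Finite)
    (hcl : ∀ f : X ≃ₜ X, closure {x | f x ≠ x} = {x | f x ≠ x} ∪ I f)
    (hconj : ∀ f u : X ≃ₜ X, I (u⁻¹ * f * u) = ⇑u⁻¹ '' I f)
    (g h : X ≃ₜ X) (hcomm : g * h = h * g)
    (hg : ∀ p : X, ({x | ∃ k : ℤ, x = (g ^ k) p}).Finite → g p = p)
    (hh : ∀ p : X, ({x | ∃ k : ℤ, x = (h ^ k) p}).Finite → h p = p) :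
    I g ∩ closure {x | h x ≠ x} = I g ∩ I h ∧
    I h ∩ closure {x | g x ≠ x} = I g ∩ I h := by
  have hgh : Commute g h := hcomm
  refine ⟨inter_closure_support_eq_of_commute hconj (hfin g) hgh (hcl h) hh, ?_⟩
  rw [Set.inter_comm (I g)]
  exact inter_closure_support_eq_of_commute hconj (hfin h) hgh.symm (hcl g) hg

/-- Preservation of important points (Lemma 2.7 of the paper).  Here
`I f` is the (finite) set of important points of a homeomorphism `f`:
fixed points of `f` such that `closure (Supp f) = Supp f ∪ I f`, and `I`
transforms naturally under conjugation, `I (f^u) = I(f)·u` (with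
left-application conventions, `I (u⁻¹ * f * u) = ⇑u⁻¹ '' I f`).  If `g`
and `h` commute and admit no nontrivial finite orbits, then
`I(g) ∩ I(h) = I(g) ∩ closure(Supp h) = I(h) ∩ closure(Supp g)`. -/
theorem important_point_preservation {X : Type*} [TopologicalSpace X]
    (I : (X ≃ₜ X) → Set X)
    (hfin : ∀ f : X ≃ₜ X, (I f).Finite)
    (hfix : ∀ f : X ≃ₜ X, ∀ x ∈ I f, f x = x)
    (hcl : ∀ f : X ≃ₜ X, closure {x | f x ≠ x} = {x | f x ≠ x} ∪ I f)
    (hconj : ∀ f u : X ≃ₜ X, I (u⁻¹ * f * u) = ⇑u⁻¹ '' I f)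
    (g h : X ≃ₜ X) (hcomm : g * h = h * g)
    (hg : ∀ p : X, ({x | ∃ k : ℤ, x = (g ^ k) p}).Finite → g p = p)
    (hh : ∀ p : X, ({x | ∃ k : ℤ, x = (h ^ k) p}).Finite → h p = p) :
    I g ∩ closure {x | h x ≠ x} = I g ∩ I h ∧
    I h ∩ closure {x | g x ≠ x} = I g ∩ I h :=
  important_point_preservation_general I hfin hcl hconj g h hcomm hg hh
end
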